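/- Let f and g be Lorenz maps with equal kneading sequences up to length n and matching vanishing of critical orbits up to time n, and let h be the combinatorial homeomorphism matching branches of f^k to branches of g^k for k ≤ n. Then for every k ≤ n and every branch I of f^k, the cutting times agree: l_k(I,f) = l_k(h(I),g) and r_k(I,f) = r_k(h(I),g), where l_k(I,f) is the unique time with 0 = sup f^{l_k}(I) and r_k(I,f) the unique time with 0 = inf f^{r_k}(I). -/

import Mathlib

/-!
For a branch `(a, b)` of `f^k` and `l < k`, the image `f^l (a, b)` is the open interval from
`f^l a` to `f₋^l b`, where `f₋` is `f` with `0` sent to `f(0⁻)` instead of `f(0⁺)`. So it suffices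
that `h` preserves the times at which the orbits of `x` under `f` and `f₋` hit `0`, and this holds
for every `x ∈ [-1, 1]`. If the orbit has not hit `0` before time `l`, then it hits `0` at time `l`
iff `x` is an endpoint of a branch of `f^(l+1)`, and `h`, being monotone and mapping branches to
branches, maps these endpoints to those of `g^(l+1)`. Otherwise, after its last visit to `0` the
orbit follows a critical orbit `f^j(0±)`, whose zeros are the same for `f` and `g` by assumption.
-/

open Set Filter

noncomputable section

/-- The full Lorenz map glued from the two branches (left branch on `x < 0`). -/
def lorenzGlue (fm fp : ℝ → ℝ) : ℝ → ℝ := fun x => if x < 0 then fm x else fp x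

/-- `(fm, fp)` is a Lorenz map on `[-1,1]`: continuous strictly increasing branches,
mapping into `[-1,1]`, fixing the endpoints `±1`. -/
def IsLorenzPair (fm fp : ℝ → ℝ) : Prop :=
  ContinuousOn fm (Icc (-1) 0) ∧ ContinuousOn fp (Icc 0 1) ∧
  StrictMonoOn fm (Icc (-1) 0) ∧ StrictMonoOn fp (Icc 0 1) ∧
  MapsTo fm (Icc (-1) 0) (Icc (-1) 1) ∧ MapsTo fp (Icc 0 1) (Icc (-1) 1) ∧
  fm (-1) = -1 ∧ fp 1 = 1

/-- No point of `S` is mapped to the critical point `0` by `f^[i]` for `i < n`;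
this is the combinatorial meaning of "`f^n` is monotone on `S`". -/
def noCut (f : ℝ → ℝ) (n : ℕ) (S : Set ℝ) : Prop :=
  ∀ x ∈ S, ∀ i < n, f^[i] x ≠ 0

/-- `[a,b]` is a branch of `f^n`: a maximal closed interval in `[-1,1]` on whose
interior `f^n` is monotone (no cut point of order `< n`). -/
def IsBranch (f : ℝ → ℝ) (n : ℕ) (a b : ℝ) : Prop :=
  -1 ≤ a ∧ a < b ∧ b ≤ 1 ∧ noCut f n (Ioo a b) ∧
  ∀ a' b' : ℝ, -1 ≤ a' → b' ≤ 1 → a' ≤ a → b ≤ b' → noCut f n (Ioo a' b') → a' = a ∧ b' = b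

/-- The word `w ∈ {L,R}^n` (here `false = L`, `true = R`) is the itinerary word
of the interval `(a,b)` for `f^n`. -/
def HasWord (f : ℝ → ℝ) (n : ℕ) (a b : ℝ) (w : ℕ → Bool) : Prop :=
  ∀ i < n, (w i = false → f^[i] '' Ioo a b ⊆ Ico (-1) 0) ∧
           (w i = true → f^[i] '' Ioo a b ⊆ Ioc 0 1)

/-- `critNeg fm fp n = f^n(0_-)`, the `n`-th left critical value. -/
def critNeg (fm fp : ℝ → ℝ) : ℕ → ℝ
  | 0 => 0
  | n + 1 => (lorenzGlue fm fp)^[n] (fm 0)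

/-- `critPos fm fp n = f^n(0_+)`, the `n`-th right critical value. -/
def critPos (fm fp : ℝ → ℝ) : ℕ → ℝ
  | 0 => 0
  | n + 1 => (lorenzGlue fm fp)^[n] (fp 0)

/-- `[a,b]` is a homterval of `f`: a maximal nondegenerate closed interval on whose
interior every iterate of `f` is monotone. -/
def IsHomterval (f : ℝ → ℝ) (a b : ℝ) : Prop :=
  -1 ≤ a ∧ a < b ∧ b ≤ 1 ∧ (∀ n, noCut f n (Ioo a b)) ∧
  ∀ a' b' : ℝ, -1 ≤ a' → b' ≤ 1 → a' ≤ a → b ≤ b' → (∀ n, noCut f n (Ioo a' b')) →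
    a' = a ∧ b' = b

/-- `(p,q,f^a,f^b)` is a renormalization of the Lorenz map `(fm,fp)` : `p < 0 < q`
are periodic of periods `a`, `b`, `f^a`, `f^b` are monotone on `(p,0)`, `(0,q)` and map
them into `[p,q]`, and the induced map is the first return map to `(p,q)`. -/
def IsRenorm (fm fp : ℝ → ℝ) (p q : ℝ) (a b : ℕ) : Prop :=
  -1 ≤ p ∧ p < 0 ∧ 0 < q ∧ q ≤ 1 ∧ 0 < a ∧ 0 < b ∧
  (lorenzGlue fm fp)^[a] p = p ∧ (lorenzGlue fm fp)^[b] q = q ∧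
  noCut (lorenzGlue fm fp) a (Ioo p 0) ∧ noCut (lorenzGlue fm fp) b (Ioo 0 q) ∧
  MapsTo ((lorenzGlue fm fp)^[a]) (Ico p 0) (Icc p q) ∧
  MapsTo ((lorenzGlue fm fp)^[b]) (Ioc 0 q) (Icc p q) ∧
  (∀ x ∈ Ioo p 0, ∀ i, 0 < i → i < a → (lorenzGlue fm fp)^[i] x ∉ Ioo p q) ∧
  (∀ x ∈ Ioo 0 q, ∀ i, 0 < i → i < b → (lorenzGlue fm fp)^[i] x ∉ Ioo p q)

/-- The renormalization on `(p,q)` with periods `(a,b)` has combinatorial type `(α,β)`: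
`α` resp. `β` is the itinerary word of the branch containing `(p,0)` resp. `(0,q)`. -/
def RenormType (f : ℝ → ℝ) (p q : ℝ) (a b : ℕ) (α β : ℕ → Bool) : Prop :=
  (∀ i < a, (α i = false → f^[i] '' Ioo p 0 ⊆ Ico (-1) 0) ∧
            (α i = true → f^[i] '' Ioo p 0 ⊆ Ioc 0 1)) ∧
  (∀ i < b, (β i = false → f^[i] '' Ioo 0 q ⊆ Ico (-1) 0) ∧
            (β i = true → f^[i] '' Ioo 0 q ⊆ Ioc 0 1))

/-- Membership in the domain of renormalization `D_{α,β}`. -/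
def InDomain (fm fp : ℝ → ℝ) (a b : ℕ) (α β : ℕ → Bool) : Prop :=
  ∃ p q : ℝ, IsRenorm fm fp p q a b ∧ RenormType (lorenzGlue fm fp) p q a b α β

section Branches

variable {f g h : ℝ → ℝ} {m n : ℕ} {a b a' b' x : ℝ}

/-- The endpoints of the branches of `f^m`. -/
def breakPoints (f : ℝ → ℝ) (m : ℕ) : Set ℝ :=
  insert (-1) (insert 1 {x ∈ Icc (-1) 1 | ∃ i < m, f^[i] x = 0})

lemma breakPoints_subset_Icc : breakPoints f m ⊆ Icc (-1) 1 := by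
  rintro x (rfl | rfl | ⟨hx, -⟩)
  · norm_num
  · norm_num
  · exact hx

lemma mem_breakPoints_iff_of_mem_Ioo (hx : x ∈ Ioo (-1) 1) :
    x ∈ breakPoints f m ↔ ∃ i < m, f^[i] x = 0 := by
  refine ⟨?_, fun hcut => Or.inr (Or.inr ⟨Ioo_subset_Icc_self hx, hcut⟩)⟩
  rintro (rfl | rfl | ⟨-, hcut⟩)
  · exact absurd hx.1 (lt_irrefl _)
  · exact absurd hx.2 (lt_irrefl _)
  · exact hcut

lemma notMem_breakPoints_of_noCut (ha : -1 ≤ a) (hb : b ≤ 1) (hnc : noCut f m (Ioo a b))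
    (hx : x ∈ Ioo a b) : x ∉ breakPoints f m := by
  rintro (rfl | rfl | ⟨-, i, hi, h0⟩)
  · exact (ha.trans_lt hx.1).false
  · exact (hx.2.trans_le hb).false
  · exact hnc x hx i hi h0

lemma isBranch_of_mem_breakPoints (ha : a ∈ breakPoints f m) (hb : b ∈ breakPoints f m)
    (hab : a < b) (hgap : ∀ y ∈ Ioo a b, y ∉ breakPoints f m) : IsBranch f m a b := by
  have ha₁ := (breakPoints_subset_Icc ha).1
  have hb₁ := (breakPoints_subset_Icc hb).2
  refine ⟨ha₁, hab, hb₁, fun y hy i hi h0 => hgap y hy ?_, fun a' b' ha' hb' haa' hbb' hnc => ?_⟩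
  · exact Or.inr (Or.inr ⟨⟨ha₁.trans hy.1.le, hy.2.le.trans hb₁⟩, i, hi, h0⟩)
  refine ⟨haa'.eq_or_lt.resolve_right fun hlt => ?_, (hbb'.eq_or_lt.resolve_right fun hlt => ?_).symm⟩
  · exact notMem_breakPoints_of_noCut ha' hb' hnc ⟨hlt, hab.trans_le hbb'⟩ ha
  · exact notMem_breakPoints_of_noCut ha' hb' hnc ⟨haa'.trans_lt hab, hlt⟩ hb

lemma noCut_Ioo_union (h₁ : noCut f m (Ioo a b)) (h₂ : noCut f m (Ioo a' b'))
    (h : a' < b) (h' : a < b') : noCut f m (Ioo (min a a') (max b b')) := by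
  rw [← Ioo_union_Ioo' h h']
  rintro x (hx | hx)
  exacts [h₁ x hx, h₂ x hx]

lemma IsBranch.eq_of_overlap (h₁ : IsBranch f m a b) (h₂ : IsBranch f m a' b')
    (h : a' < b) (h' : a < b') : a = a' ∧ b = b' := by
  have hnc := noCut_Ioo_union h₁.2.2.2.1 h₂.2.2.2.1 h h'
  have hlo := le_min h₁.1 h₂.1
  have hhi := max_le h₁.2.2.1 h₂.2.2.1
  have e₁ := h₁.2.2.2.2 _ _ hlo hhi (min_le_left _ _) (le_max_left _ _) hnc
  have e₂ := h₂.2.2.2.2 _ _ hlo hhi (min_le_right _ _) (le_max_right _ _) hnc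
  exact ⟨e₁.1.symm.trans e₂.1, e₁.2.symm.trans e₂.2⟩

lemma exists_isBranch_mem_Ico (hfin : (breakPoints f m).Finite) (hx : x ∈ Ico (-1) 1) :
    ∃ a b, IsBranch f m a b ∧ x ∈ Ico a b ∧ (x ∈ breakPoints f m ↔ a = x) := by
  obtain ⟨a, ⟨haC, ha⟩, hmax⟩ := (breakPoints f m ∩ Icc (-1) x).exists_max_image id
    (hfin.inter_of_left _) ⟨-1, Or.inl rfl, le_rfl, hx.1⟩
  obtain ⟨b, ⟨hbC, hb⟩, hmin⟩ := (breakPoints f m ∩ Ioc x 1).exists_min_image id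
    (hfin.inter_of_left _) ⟨1, Or.inr (Or.inl rfl), hx.2, le_rfl⟩
  refine ⟨a, b, isBranch_of_mem_breakPoints haC hbC (ha.2.trans_lt hb.1) fun y hy hyC => ?_,
    ⟨ha.2, hb.1⟩, fun hxC => le_antisymm ha.2 (hmax x ⟨hxC, hx.1, le_rfl⟩), fun e => e ▸ haC⟩
  rcases le_or_gt y x with hyx | hxy
  · exact (hmax y ⟨hyC, (breakPoints_subset_Icc hyC).1, hyx⟩).not_gt hy.1
  · exact (hmin y ⟨hyC, hxy, (breakPoints_subset_Icc hyC).2⟩).not_gt hy.2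

lemma IsBranch.left_mem_breakPoints (hfin : (breakPoints f m).Finite) (hbr : IsBranch f m a b) :
    a ∈ breakPoints f m := by
  obtain ⟨a₁, b₁, hbr₁, ha, hiff⟩ :=
    exists_isBranch_mem_Ico hfin ⟨hbr.1, hbr.2.1.trans_le hbr.2.2.1⟩
  exact hiff.2 (hbr.eq_of_overlap hbr₁ (ha.1.trans_lt hbr.2.1) ha.2).1.symm

lemma isBranch_zero_iff : IsBranch f 0 a b ↔ a = -1 ∧ b = 1 := by
  have hnc : ∀ a b, noCut f 0 (Ioo a b) := fun _ _ _ _ _ hi => absurd hi (Nat.not_lt_zero _)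
  refine ⟨fun hbr => ?_, ?_⟩
  · obtain ⟨e₁, e₂⟩ := hbr.2.2.2.2 (-1) 1 le_rfl le_rfl hbr.1 hbr.2.2.1 (hnc _ _)
    exact ⟨e₁.symm, e₂.symm⟩
  · rintro ⟨rfl, rfl⟩
    exact ⟨le_rfl, by norm_num, le_rfl, hnc _ _,
      fun a' b' ha' hb' ha'' hb'' _ => ⟨le_antisymm ha'' ha', le_antisymm hb' hb''⟩⟩

def MapsBranches (f g h : ℝ → ℝ) (n : ℕ) : Prop :=
  ∀ k ≤ n, ∀ a b : ℝ, IsBranch f k a b → IsBranch g k (h a) (h b)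

lemma MapsBranches.map_neg_one_and_one (hB : MapsBranches f g h n) : h (-1) = -1 ∧ h 1 = 1 :=
  isBranch_zero_iff.1 (hB 0 n.zero_le _ _ (isBranch_zero_iff.2 ⟨rfl, rfl⟩))

lemma MapsBranches.mem_breakPoints_iff (hB : MapsBranches f g h n)
    (hf : (breakPoints f m).Finite) (hg : (breakPoints g m).Finite)
    (hmono : StrictMonoOn h (Icc (-1) 1)) (hm : m ≤ n) (hx : x ∈ Ico (-1) 1) :
    h x ∈ breakPoints g m ↔ x ∈ breakPoints f m := by
  obtain ⟨a, b, hbr, hxab, hiff⟩ := exists_isBranch_mem_Ico hf hx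
  have hbr' := hB m hm a b hbr
  rw [hiff]
  refine ⟨fun hxC => hxab.1.eq_or_lt.resolve_right fun hax => ?_, fun e => ?_⟩
  · have hxI : x ∈ Icc (-1) 1 := Ico_subset_Icc_self hx
    have hmem : h x ∈ Ioo (h a) (h b) :=
      ⟨hmono ⟨hbr.1, hbr.2.1.le.trans hbr.2.2.1⟩ hxI hax,
        hmono hxI ⟨hbr.1.trans hbr.2.1.le, hbr.2.2.1⟩ hxab.2⟩
    exact notMem_breakPoints_of_noCut hbr'.1 hbr'.2.2.1 hbr'.2.2.2.1 hmem hxC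
  · rw [← e]
    exact hbr'.left_mem_breakPoints hg

end Branches

theorem forall_lt_iff_of_first_of_restart {P Q : ℕ → Prop} {N : ℕ}
    (first : ∀ l < N, (∀ j < l, ¬P j) → (∀ j < l, ¬Q j) → (P l ↔ Q l))
    (restart : ∀ z l, z < l → l < N → P z → Q z → (∀ j, z < j → j < l → ¬P j) →
      (∀ j, z < j → j < l → ¬Q j) → (P l ↔ Q l)) :
    ∀ l < N, P l ↔ Q l := by
  intro l
  induction l using Nat.strong_induction_on with
  | _ l ih =>
    intro hl
    have ih' : ∀ j < l, P j ↔ Q j := fun j hj => ih j hj (hj.trans hl)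
    by_cases hP : ∃ z < l, P z
    · obtain ⟨z, ⟨hzl, hz⟩, hlast⟩ := {z | z < l ∧ P z}.exists_max_image id
        ((finite_Iio l).subset fun z hz => hz.1) hP
      refine restart z l hzl hl hz ((ih' z hzl).1 hz) (fun j hzj hjl hj => ?_) fun j hzj hjl hj => ?_
      · exact (hlast j ⟨hjl, hj⟩).not_gt hzj
      · exact (hlast j ⟨hjl, (ih' j hjl).2 hj⟩).not_gt hzj
    · push Not at hP
      exact first l hl hP fun j hj hQ => hP j hj ((ih' j hj).2 hQ)

section Lorenz

variable {fm fp : ℝ → ℝ} {k i d l z : ℕ} {a b x y : ℝ}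

/-- `lorenzGlue` with `0` sent to `f(0⁻)`: suprema of images of intervals follow its orbits, as
infima follow those of `lorenzGlue`. -/
def lorenzGlueLeft (fm fp : ℝ → ℝ) : ℝ → ℝ := fun x => if x ≤ 0 then fm x else fp x

lemma lorenzGlue_of_neg (hx : x < 0) : lorenzGlue fm fp x = fm x := if_pos hx

lemma lorenzGlue_of_nonneg (hx : 0 ≤ x) : lorenzGlue fm fp x = fp x := if_neg hx.not_gt

lemma lorenzGlueLeft_of_nonpos (hx : x ≤ 0) : lorenzGlueLeft fm fp x = fm x := if_pos hx

lemma lorenzGlueLeft_of_pos (hx : 0 < x) : lorenzGlueLeft fm fp x = fp x := if_neg hx.not_ge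

lemma lorenzGlueLeft_of_ne_zero (hx : x ≠ 0) : lorenzGlueLeft fm fp x = lorenzGlue fm fp x := by
  rcases hx.lt_or_gt with hx | hx
  · rw [lorenzGlueLeft_of_nonpos hx.le, lorenzGlue_of_neg hx]
  · rw [lorenzGlueLeft_of_pos hx, lorenzGlue_of_nonneg hx.le]

lemma iterate_lorenzGlueLeft_eq (hy : ∀ e < d, (lorenzGlueLeft fm fp)^[e] y ≠ 0) :
    (lorenzGlueLeft fm fp)^[d] y = (lorenzGlue fm fp)^[d] y := by
  induction d with
  | zero => rfl
  | succ d ih =>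
    have e := ih fun e he => hy e (he.trans d.lt_succ_self)
    have hd : (lorenzGlue fm fp)^[d] y ≠ 0 := e ▸ hy d d.lt_succ_self
    rw [Function.iterate_succ_apply', Function.iterate_succ_apply', e, lorenzGlueLeft_of_ne_zero hd]

lemma critPos_eq_iterate (d : ℕ) : critPos fm fp d = (lorenzGlue fm fp)^[d] 0 := by
  cases d with
  | zero => rfl
  | succ d => rw [Function.iterate_succ_apply, lorenzGlue_of_nonneg le_rfl]; rfl

lemma critNeg_eq_iterate_lorenzGlueLeft
    (h0 : ∀ e, 0 < e → e < d → (lorenzGlueLeft fm fp)^[e] 0 ≠ 0) :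
    critNeg fm fp d = (lorenzGlueLeft fm fp)^[d] 0 := by
  cases d with
  | zero => rfl
  | succ d =>
    rw [Function.iterate_succ_apply, lorenzGlueLeft_of_nonpos le_rfl, iterate_lorenzGlueLeft_eq]
    · rfl
    · intro e he
      have := h0 (e + 1) e.succ_pos (by omega)
      rwa [Function.iterate_succ_apply, lorenzGlueLeft_of_nonpos le_rfl] at this

lemma iterate_lorenzGlue_eq_critPos (hz : (lorenzGlue fm fp)^[z] x = 0) (hzl : z ≤ l) :
    (lorenzGlue fm fp)^[l] x = critPos fm fp (l - z) := by
  rw [critPos_eq_iterate, ← hz, ← Function.iterate_add_apply, Nat.sub_add_cancel hzl]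

lemma iterate_lorenzGlueLeft_eq_critNeg (hz : (lorenzGlueLeft fm fp)^[z] x = 0) (hzl : z ≤ l)
    (hgap : ∀ j, z < j → j < l → (lorenzGlueLeft fm fp)^[j] x ≠ 0) :
    (lorenzGlueLeft fm fp)^[l] x = critNeg fm fp (l - z) := by
  have hshift : ∀ e, (lorenzGlueLeft fm fp)^[e] 0 = (lorenzGlueLeft fm fp)^[e + z] x := by
    intro e
    rw [Function.iterate_add_apply, hz]
  rw [critNeg_eq_iterate_lorenzGlueLeft fun e he hel => hshift e ▸ hgap _ (by omega) (by omega),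
    hshift, Nat.sub_add_cancel hzl]

theorem IsLorenzPair.iterate_neg_one (hF : IsLorenzPair fm fp) (i : ℕ) :
    (lorenzGlue fm fp)^[i] (-1) = -1 :=
  Function.iterate_fixed ((lorenzGlue_of_neg (by norm_num)).trans hF.2.2.2.2.2.2.1) i

theorem IsLorenzPair.iterate_one (hF : IsLorenzPair fm fp) (i : ℕ) :
    (lorenzGlue fm fp)^[i] 1 = 1 :=
  Function.iterate_fixed ((lorenzGlue_of_nonneg zero_le_one).trans hF.2.2.2.2.2.2.2) i

theorem IsLorenzPair.mapsTo_lorenzGlue (hF : IsLorenzPair fm fp) :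
    MapsTo (lorenzGlue fm fp) (Icc (-1) 1) (Icc (-1) 1) := by
  intro x hx
  rcases lt_or_ge x 0 with h0 | h0
  · rw [lorenzGlue_of_neg h0]
    exact hF.2.2.2.2.1 ⟨hx.1, h0.le⟩
  · rw [lorenzGlue_of_nonneg h0]
    exact hF.2.2.2.2.2.1 ⟨h0, hx.2⟩

theorem IsLorenzPair.finite_preimage_lorenzGlue (hF : IsLorenzPair fm fp) {T : Set ℝ}
    (hT : T.Finite) : {x ∈ Icc (-1) 1 | lorenzGlue fm fp x ∈ T}.Finite := by
  have hL : {x ∈ Icc (-1) 0 | fm x ∈ T}.Finite :=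
    Finite.of_finite_image (hT.subset (image_subset_iff.2 fun x hx => hx.2))
      (hF.2.2.1.injOn.mono fun x hx => hx.1)
  have hR : {x ∈ Icc 0 1 | fp x ∈ T}.Finite :=
    Finite.of_finite_image (hT.subset (image_subset_iff.2 fun x hx => hx.2))
      (hF.2.2.2.1.injOn.mono fun x hx => hx.1)
  refine (hL.union hR).subset fun x ⟨hx, hxT⟩ => ?_
  rcases lt_or_ge x 0 with h0 | h0
  · exact Or.inl ⟨⟨hx.1, h0.le⟩, by rwa [lorenzGlue_of_neg h0] at hxT⟩
  · exact Or.inr ⟨⟨h0, hx.2⟩, by rwa [lorenzGlue_of_nonneg h0] at hxT⟩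

theorem IsLorenzPair.finite_preimage_iterate (hF : IsLorenzPair fm fp) {S : Set ℝ}
    (hS : S.Finite) (i : ℕ) : {x ∈ Icc (-1) 1 | (lorenzGlue fm fp)^[i] x ∈ S}.Finite := by
  induction i with
  | zero => exact hS.subset fun x hx => hx.2
  | succ i ih =>
    refine (hF.finite_preimage_lorenzGlue ih).subset fun x ⟨hx, hxS⟩ => ?_
    rw [Function.iterate_succ_apply] at hxS
    exact ⟨hx, hF.mapsTo_lorenzGlue hx, hxS⟩

theorem IsLorenzPair.finite_breakPoints (hF : IsLorenzPair fm fp) (m : ℕ) :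
    (breakPoints (lorenzGlue fm fp) m).Finite := by
  refine ((((finite_Iio m).biUnion fun i _ =>
    hF.finite_preimage_iterate (finite_singleton 0) i).subset ?_).insert 1).insert (-1)
  rintro x ⟨hx, i, hi, h0⟩
  exact mem_biUnion hi ⟨hx, h0⟩

theorem IsLorenzPair.image_iterate_Ioo (hF : IsLorenzPair fm fp) (ha : -1 ≤ a) (hab : a < b)
    (hb : b ≤ 1) (hnc : noCut (lorenzGlue fm fp) k (Ioo a b)) (hi : i ≤ k) :
    -1 ≤ (lorenzGlue fm fp)^[i] a ∧
      (lorenzGlue fm fp)^[i] a < (lorenzGlueLeft fm fp)^[i] b ∧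
      (lorenzGlueLeft fm fp)^[i] b ≤ 1 ∧
      (lorenzGlue fm fp)^[i] '' Ioo a b =
        Ioo ((lorenzGlue fm fp)^[i] a) ((lorenzGlueLeft fm fp)^[i] b) := by
  obtain ⟨hcm, hcp, hsm, hsp, hmm, hmp, -, -⟩ := hF
  induction i with
  | zero => simpa using ⟨ha, hab, hb⟩
  | succ i ih =>
    obtain ⟨hu, huv, hv, himg⟩ := ih (by omega)
    set u := (lorenzGlue fm fp)^[i] a
    set v := (lorenzGlueLeft fm fp)^[i] b
    have hside : v ≤ 0 ∨ 0 ≤ u := by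
      by_contra! hc
      obtain ⟨y, hy, hy0⟩ : (0 : ℝ) ∈ (lorenzGlue fm fp)^[i] '' Ioo a b := himg ▸ ⟨hc.2, hc.1⟩
      exact hnc y hy i (by omega) hy0
    rw [Function.iterate_succ_apply', Function.iterate_succ_apply', Function.iterate_succ',
      image_comp, himg]
    rcases hside with hv0 | hu0
    · have hI : Icc u v ⊆ Icc (-1) 0 := Icc_subset_Icc hu hv0
      have hEq : EqOn (lorenzGlue fm fp) fm (Ioo u v) :=
        fun y hy => lorenzGlue_of_neg (hy.2.trans_le hv0)
      rw [hEq.image_eq, lorenzGlue_of_neg (huv.trans_le hv0), lorenzGlueLeft_of_nonpos hv0,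
        (hcm.mono hI).image_Ioo_of_strictMonoOn huv.le (hsm.mono hI)]
      exact ⟨(hmm (hI (left_mem_Icc.2 huv.le))).1,
        hsm (hI (left_mem_Icc.2 huv.le)) (hI (right_mem_Icc.2 huv.le)) huv,
        (hmm (hI (right_mem_Icc.2 huv.le))).2, rfl⟩
    · have hI : Icc u v ⊆ Icc 0 1 := Icc_subset_Icc hu0 hv
      have hEq : EqOn (lorenzGlue fm fp) fp (Ioo u v) :=
        fun y hy => lorenzGlue_of_nonneg (hu0.trans hy.1.le)
      rw [hEq.image_eq, lorenzGlue_of_nonneg hu0, lorenzGlueLeft_of_pos (hu0.trans_lt huv),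
        (hcp.mono hI).image_Ioo_of_strictMonoOn huv.le (hsp.mono hI)]
      exact ⟨(hmp (hI (left_mem_Icc.2 huv.le))).1,
        hsp (hI (left_mem_Icc.2 huv.le)) (hI (right_mem_Icc.2 huv.le)) huv,
        (hmp (hI (right_mem_Icc.2 huv.le))).2, rfl⟩

theorem IsBranch.isGLB_image_iterate (hbr : IsBranch (lorenzGlue fm fp) k a b)
    (hF : IsLorenzPair fm fp) (hi : i ≤ k) :
    IsGLB ((lorenzGlue fm fp)^[i] '' Ioo a b) ((lorenzGlue fm fp)^[i] a) := by
  obtain ⟨-, hlt, -, himg⟩ := hF.image_iterate_Ioo hbr.1 hbr.2.1 hbr.2.2.1 hbr.2.2.2.1 hi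
  rw [himg]
  exact isGLB_Ioo hlt

theorem IsBranch.isLUB_image_iterate (hbr : IsBranch (lorenzGlue fm fp) k a b)
    (hF : IsLorenzPair fm fp) (hi : i ≤ k) :
    IsLUB ((lorenzGlue fm fp)^[i] '' Ioo a b) ((lorenzGlueLeft fm fp)^[i] b) := by
  obtain ⟨-, hlt, -, himg⟩ := hF.image_iterate_Ioo hbr.1 hbr.2.1 hbr.2.2.1 hbr.2.2.2.1 hi
  rw [himg]
  exact isLUB_Ioo hlt

end Lorenz

section Transfer

variable {fm fp gm gp h : ℝ → ℝ} {n l : ℕ} {x : ℝ}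

theorem MapsBranches.iterate_eq_zero_iff_of_forall_lt (hF : IsLorenzPair fm fp)
    (hG : IsLorenzPair gm gp) (hmono : StrictMonoOn h (Icc (-1) 1))
    (hB : MapsBranches (lorenzGlue fm fp) (lorenzGlue gm gp) h n)
    (hx : x ∈ Icc (-1) 1) (hl : l < n)
    (hf : ∀ j < l, (lorenzGlue fm fp)^[j] x ≠ 0)
    (hg : ∀ j < l, (lorenzGlue gm gp)^[j] (h x) ≠ 0) :
    (lorenzGlue fm fp)^[l] x = 0 ↔ (lorenzGlue gm gp)^[l] (h x) = 0 := by
  obtain ⟨hm1, h1⟩ := hB.map_neg_one_and_one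
  rcases hx.1.eq_or_lt with rfl | hx₁
  · rw [hm1, hF.iterate_neg_one, hG.iterate_neg_one]
  rcases hx.2.eq_or_lt with rfl | hx₂
  · rw [h1, hF.iterate_one, hG.iterate_one]
  have hhx : h x ∈ Ioo (-1) 1 :=
    ⟨hm1 ▸ hmono ⟨le_rfl, by norm_num⟩ hx hx₁, h1 ▸ hmono hx ⟨by norm_num, le_rfl⟩ hx₂⟩
  have first_cut : ∀ {φ : ℝ → ℝ} {y : ℝ}, (∀ j < l, φ^[j] y ≠ 0) →
      ((∃ i < l + 1, φ^[i] y = 0) ↔ φ^[l] y = 0) := fun hφ =>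
    ⟨fun ⟨i, hi, h0⟩ => (Nat.lt_succ_iff_lt_or_eq.1 hi).elim (fun hi => absurd h0 (hφ i hi))
      (fun e => e ▸ h0), fun h0 => ⟨l, l.lt_succ_self, h0⟩⟩
  have key := hB.mem_breakPoints_iff (hF.finite_breakPoints (l + 1))
    (hG.finite_breakPoints (l + 1)) hmono hl ⟨hx.1, hx₂⟩
  rw [mem_breakPoints_iff_of_mem_Ioo hhx, mem_breakPoints_iff_of_mem_Ioo ⟨hx₁, hx₂⟩,
    first_cut hf, first_cut hg] at key
  exact key.symm

theorem MapsBranches.iterate_lorenzGlue_eq_zero_iff (hF : IsLorenzPair fm fp)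
    (hG : IsLorenzPair gm gp) (hmono : StrictMonoOn h (Icc (-1) 1))
    (hB : MapsBranches (lorenzGlue fm fp) (lorenzGlue gm gp) h n)
    (hK : ∀ i ≤ n, critPos fm fp i = 0 ↔ critPos gm gp i = 0) (hx : x ∈ Icc (-1) 1) :
    ∀ l < n, (lorenzGlue fm fp)^[l] x = 0 ↔ (lorenzGlue gm gp)^[l] (h x) = 0 := by
  refine forall_lt_iff_of_first_of_restart
    (fun l hl hf hg => hB.iterate_eq_zero_iff_of_forall_lt hF hG hmono hx hl hf hg)
    fun z l hzl hl hz hz' _ _ => ?_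
  rw [iterate_lorenzGlue_eq_critPos hz hzl.le, iterate_lorenzGlue_eq_critPos hz' hzl.le]
  exact hK _ (by omega)

theorem MapsBranches.iterate_lorenzGlueLeft_eq_zero_iff (hF : IsLorenzPair fm fp)
    (hG : IsLorenzPair gm gp) (hmono : StrictMonoOn h (Icc (-1) 1))
    (hB : MapsBranches (lorenzGlue fm fp) (lorenzGlue gm gp) h n)
    (hK : ∀ i ≤ n, critNeg fm fp i = 0 ↔ critNeg gm gp i = 0) (hx : x ∈ Icc (-1) 1) :
    ∀ l < n, (lorenzGlueLeft fm fp)^[l] x = 0 ↔ (lorenzGlueLeft gm gp)^[l] (h x) = 0 := by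
  refine forall_lt_iff_of_first_of_restart (fun l hl hf hg => ?_)
    fun z l hzl hl hz hz' hf hg => ?_
  · rw [iterate_lorenzGlueLeft_eq hf, iterate_lorenzGlueLeft_eq hg]
    refine hB.iterate_eq_zero_iff_of_forall_lt hF hG hmono hx hl (fun j hj => ?_) fun j hj => ?_
    · rw [← iterate_lorenzGlueLeft_eq fun e he => hf e (he.trans hj)]
      exact hf j hj
    · rw [← iterate_lorenzGlueLeft_eq fun e he => hg e (he.trans hj)]
      exact hg j hj
  · rw [iterate_lorenzGlueLeft_eq_critNeg hz hzl.le hf,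
      iterate_lorenzGlueLeft_eq_critNeg hz' hzl.le hg]
    exact hK _ (by omega)

end Transfer

theorem cutting_times_preserved_general
    (fm fp gm gp : ℝ → ℝ) (hF : IsLorenzPair fm fp) (hG : IsLorenzPair gm gp) (n : ℕ)
    (hKneg : ∀ i ≤ n, (0 < critNeg fm fp i ↔ 0 < critNeg gm gp i) ∧
      (critNeg fm fp i = 0 ↔ critNeg gm gp i = 0))
    (hKpos : ∀ i ≤ n, (0 < critPos fm fp i ↔ 0 < critPos gm gp i) ∧
      (critPos fm fp i = 0 ↔ critPos gm gp i = 0))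
    (h : ℝ → ℝ) (hmono : StrictMonoOn h (Icc (-1) 1))
    (hbranch : ∀ k ≤ n, ∀ a b : ℝ, IsBranch (lorenzGlue fm fp) k a b →
      IsBranch (lorenzGlue gm gp) k (h a) (h b) ∧
      ∀ w : ℕ → Bool, HasWord (lorenzGlue fm fp) k a b w →
        HasWord (lorenzGlue gm gp) k (h a) (h b) w) :
    ∀ k ≤ n, ∀ a b : ℝ, IsBranch (lorenzGlue fm fp) k a b →
      (∀ l < k, IsLUB ((lorenzGlue fm fp)^[l] '' Ioo a b) 0 →
        IsLUB ((lorenzGlue gm gp)^[l] '' Ioo (h a) (h b)) 0) ∧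
      (∀ r < k, IsGLB ((lorenzGlue fm fp)^[r] '' Ioo a b) 0 →
        IsGLB ((lorenzGlue gm gp)^[r] '' Ioo (h a) (h b)) 0) := by
  have hB : MapsBranches (lorenzGlue fm fp) (lorenzGlue gm gp) h n :=
    fun k hk a b hbr => (hbranch k hk a b hbr).1
  intro k hkn a b hbr
  have hbr' := hB k hkn a b hbr
  refine ⟨fun l hl hlub => ?_, fun r hr hglb => ?_⟩
  · have h0 := (hbr.isLUB_image_iterate hF hl.le).unique hlub
    have hb : b ∈ Icc (-1) 1 := ⟨hbr.1.trans hbr.2.1.le, hbr.2.2.1⟩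
    rw [← (hB.iterate_lorenzGlueLeft_eq_zero_iff hF hG hmono (fun i hi => (hKneg i hi).2) hb l
      (hl.trans_le hkn)).1 h0]
    exact hbr'.isLUB_image_iterate hG hl.le
  · have h0 := (hbr.isGLB_image_iterate hF hr.le).unique hglb
    have ha : a ∈ Icc (-1) 1 := ⟨hbr.1, hbr.2.1.le.trans hbr.2.2.1⟩
    rw [← (hB.iterate_lorenzGlue_eq_zero_iff hF hG hmono (fun i hi => (hKpos i hi).2) ha r
      (hr.trans_le hkn)).1 h0]
    exact hbr'.isGLB_image_iterate hG hr.le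

/-- **Lemma 2.1(4), cutting times.** Let `f`, `g` be Lorenz maps with the same kneading data
up to time `n`, and let `h` be the combinatorial homeomorphism matching branches of `f^k` to
branches of `g^k` (with the same itinerary words) for `k ≤ n`. Then `h` preserves the cutting
times: for a branch `I` of `f^k` and `l < k`, `0` is the supremum (resp. infimum) of
`f^l(I)` iff it is for `g^l(h(I))`. -/
theorem cutting_times_preserved
    (fm fp gm gp : ℝ → ℝ) (hF : IsLorenzPair fm fp) (hG : IsLorenzPair gm gp) (n : ℕ)
    (hKneg : ∀ i ≤ n, (0 < critNeg fm fp i ↔ 0 < critNeg gm gp i) ∧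
      (critNeg fm fp i = 0 ↔ critNeg gm gp i = 0))
    (hKpos : ∀ i ≤ n, (0 < critPos fm fp i ↔ 0 < critPos gm gp i) ∧
      (critPos fm fp i = 0 ↔ critPos gm gp i = 0))
    (h : ℝ → ℝ) (hcont : ContinuousOn h (Icc (-1) 1)) (hmono : StrictMonoOn h (Icc (-1) 1))
    (hsurj : h '' Icc (-1) 1 = Icc (-1) 1) (hm1 : h (-1) = -1) (h1 : h 1 = 1)
    (hbranch : ∀ k ≤ n, ∀ a b : ℝ, IsBranch (lorenzGlue fm fp) k a b →
      IsBranch (lorenzGlue gm gp) k (h a) (h b) ∧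
      ∀ w : ℕ → Bool, HasWord (lorenzGlue fm fp) k a b w →
        HasWord (lorenzGlue gm gp) k (h a) (h b) w) :
    ∀ k ≤ n, ∀ a b : ℝ, IsBranch (lorenzGlue fm fp) k a b →
      (∀ l < k, IsLUB ((lorenzGlue fm fp)^[l] '' Ioo a b) 0 →
        IsLUB ((lorenzGlue gm gp)^[l] '' Ioo (h a) (h b)) 0) ∧
      (∀ r < k, IsGLB ((lorenzGlue fm fp)^[r] '' Ioo a b) 0 →
        IsGLB ((lorenzGlue gm gp)^[r] '' Ioo (h a) (h b)) 0) :=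
  cutting_times_preserved_general fm fp gm gp hF hG n hKneg hKpos h hmono hbranch
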